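/- Let n ≥ 1, let p be an odd prime, and let u be a normalized unit of order 2p in the integral group ring ℤS_n. Then ε_{A_n}(u) = ε_{A_n}(u^p), and this common value is 0 or 1. -/

import Mathlib

/-!
The augmentation and the sign character extend to ring homomorphisms `ℤS_n → ℤ`, and summing
them coefficientwise counts every even permutation twice and every odd one not at all:
`2 ε_{A_n}(v) = aug v + sgn v`. A unit `u` has `sgn u = ±1`, which is fixed by odd powers, so
for a normalized unit `2 ε_{A_n}(u) = 2 ε_{A_n}(u^p) = 1 ± 1`.
-/

/-- The augmentation of an element of the integral group ring `ℤG`: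
the sum of all of its coefficients. -/
def aug {G : Type*} [Group G] [Fintype G] (u : MonoidAlgebra ℤ G) : ℤ :=
  ∑ g : G, u.coeff g

/-- The generalized partial augmentation of u ∈ ℤS_n with respect to the
alternating group A_n: the sum of the coefficients of u over all even permutations. -/
def augAlt (n : ℕ) (u : MonoidAlgebra ℤ (Equiv.Perm (Fin n))) : ℤ :=
  ∑ g : Equiv.Perm (Fin n), if Equiv.Perm.sign g = 1 then u.coeff g else 0

open MonoidAlgebra

section

variable {G : Type*} [Group G] [Fintype G]

lemma lift_apply_eq_sum (F : G →* ℤ) (v : MonoidAlgebra ℤ G) :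
    lift ℤ ℤ G F v = ∑ g, v.coeff g * F g := by
  rw [lift_apply, Finsupp.sum_fintype _ _ (by simp)]
  simp only [smul_eq_mul]

lemma aug_eq_lift_one (v : MonoidAlgebra ℤ G) : aug v = lift ℤ ℤ G 1 v := by
  simp [lift_apply_eq_sum, aug]

lemma aug_pow (v : MonoidAlgebra ℤ G) (k : ℕ) : aug (v ^ k) = aug v ^ k := by
  simp only [aug_eq_lift_one, map_pow]

lemma two_mul_sum_ker_eq (χ : G →* ℤˣ) (v : MonoidAlgebra ℤ G) :
    2 * ∑ g, (if χ g = 1 then v.coeff g else 0) =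
      aug v + lift ℤ ℤ G ((Units.coeHom ℤ).comp χ) v := by
  rw [lift_apply_eq_sum, aug, Finset.mul_sum, ← Finset.sum_add_distrib]
  refine Finset.sum_congr rfl fun g _ => ?_
  rcases Int.units_eq_one_or (χ g) with h | h <;> simp [h, two_mul]

end

noncomputable def signAlgHom (n : ℕ) : MonoidAlgebra ℤ (Equiv.Perm (Fin n)) →ₐ[ℤ] ℤ :=
  lift ℤ ℤ _ ((Units.coeHom ℤ).comp Equiv.Perm.sign)

lemma two_mul_augAlt (n : ℕ) (v : MonoidAlgebra ℤ (Equiv.Perm (Fin n))) :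
    2 * augAlt n v = aug v + signAlgHom n v :=
  two_mul_sum_ker_eq Equiv.Perm.sign v

lemma signAlgHom_eq_one_or_neg_one {n : ℕ} {v : MonoidAlgebra ℤ (Equiv.Perm (Fin n))}
    (hv : IsUnit v) : signAlgHom n v = 1 ∨ signAlgHom n v = -1 :=
  Int.isUnit_iff.mp (hv.map _)

theorem stmt_7_general (n p : ℕ) (hodd : Odd p)
    (u : (MonoidAlgebra ℤ (Equiv.Perm (Fin n)))ˣ)
    (hu1 : aug (u : MonoidAlgebra ℤ (Equiv.Perm (Fin n))) = 1) :
    augAlt n (u : MonoidAlgebra ℤ (Equiv.Perm (Fin n))) =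
      augAlt n ((u ^ p : (MonoidAlgebra ℤ (Equiv.Perm (Fin n)))ˣ) :
        MonoidAlgebra ℤ (Equiv.Perm (Fin n))) ∧
    (augAlt n (u : MonoidAlgebra ℤ (Equiv.Perm (Fin n))) = 0 ∨
     augAlt n (u : MonoidAlgebra ℤ (Equiv.Perm (Fin n))) = 1) := by
  have hsgn := signAlgHom_eq_one_or_neg_one u.isUnit
  have hsgn_pow : signAlgHom n u ^ p = signAlgHom n u := by
    rcases hsgn with h | h <;> simp [h, hodd.neg_one_pow]
  have h1 := two_mul_augAlt n u
  have hp := two_mul_augAlt n ((u : MonoidAlgebra ℤ (Equiv.Perm (Fin n))) ^ p)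
  rw [aug_pow, map_pow, hsgn_pow, hu1, one_pow] at hp
  rw [hu1] at h1
  rw [Units.val_pow_eq_pow_val]
  omega

/-- For an odd prime p and a normalized unit u of order 2p in ℤS_n, we have
ε_(A_n)(u) = ε_(A_n)(u^p) and this common value is 0 or 1. -/
theorem stmt_7 (n p : ℕ) (hn : 1 ≤ n) (hp : p.Prime) (hodd : Odd p)
    (u : (MonoidAlgebra ℤ (Equiv.Perm (Fin n)))ˣ)
    (hu1 : aug (u : MonoidAlgebra ℤ (Equiv.Perm (Fin n))) = 1)
    (huo : orderOf u = 2 * p) :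
    augAlt n (u : MonoidAlgebra ℤ (Equiv.Perm (Fin n))) =
      augAlt n ((u ^ p : (MonoidAlgebra ℤ (Equiv.Perm (Fin n)))ˣ) :
        MonoidAlgebra ℤ (Equiv.Perm (Fin n))) ∧
    (augAlt n (u : MonoidAlgebra ℤ (Equiv.Perm (Fin n))) = 0 ∨
     augAlt n (u : MonoidAlgebra ℤ (Equiv.Perm (Fin n))) = 1) :=
  stmt_7_general n p hodd u hu1
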